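/- If p_e, p_x, q ∈ (0,1) with p_e + p_x + q = 1 and √p_e = p_x, then for any other pair p_e' = p_e − Δ, p_x' = p_x + Δ with Δ ≠ 0, p_e', p_x' ∈ (0,1), and d > 0, we have max(p_e'^(d/2), p_x'^d) > max(p_e^(d/2), p_x^d). -/
import Mathlib


theorem stmt_2 (pe px q Δ d : ℝ)
    (hpe : pe ∈ Set.Ioo (0:ℝ) 1) (hpx : px ∈ Set.Ioo (0:ℝ) 1)
    (hq : q ∈ Set.Ioo (0:ℝ) 1) (hsum : pe + px + q = 1)
    (hbal : Real.sqrt pe = px) (hΔ : Δ ≠ 0)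
    (hpe' : pe - Δ ∈ Set.Ioo (0:ℝ) 1) (hpx' : px + Δ ∈ Set.Ioo (0:ℝ) 1)
    (hd : 0 < d) :
    max ((pe - Δ) ^ (d / 2)) ((px + Δ) ^ d) > max (pe ^ (d / 2)) (px ^ d) := by
  have heq : pe ^ (d / 2) = px ^ d := by
    rw [← hbal, Real.sqrt_eq_rpow, ← Real.rpow_mul hpe.1.le]
    ring_nf
  have hmax : max (pe ^ (d / 2)) (px ^ d) = px ^ d := by rw [heq, max_self]
  rw [hmax]
  rcases lt_or_gt_of_ne hΔ with h | h
  · -- Δ < 0 : pe - Δ > pe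
    have : pe ^ (d / 2) < (pe - Δ) ^ (d / 2) :=
      Real.rpow_lt_rpow hpe.1.le (by linarith) (by linarith)
    exact lt_max_of_lt_left (heq ▸ this)
  · have : px ^ d < (px + Δ) ^ d :=
      Real.rpow_lt_rpow hpx.1.le (by linarith) hd
    exact lt_max_of_lt_right this
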